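/- Let n ≥ 1 and let f ∈ ℂ[x₀,…,xₙ] be homogeneous of degree d ≥ 1. Suppose there exists (A₀,…,Aₙ) ∈ R^{n+1} with A₀∂₀f + ⋯ + Aₙ∂ₙf = 0 and A₀(1,0,…,0) ≠ 0. Set g(y₁,…,yₙ) = f(1,y₁,…,yₙ), gⱼ = ∂g/∂yⱼ and bⱼ(y) = Aⱼ(1,y₁,…,yₙ). Then, using the identity b₀·(d·g − Σⱼ yⱼ gⱼ) + Σⱼ bⱼ gⱼ = 0 with b₀(0) ≠ 0, one concludes that g belongs to the ideal (g₁,…,gₙ) in the localization of ℂ[y₁,…,yₙ] at the maximal ideal (y₁,…,yₙ). -/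

import Mathlib

open MvPolynomial

noncomputable section

/-- Dehomogenization with respect to `x₀`: substitute `x₀ = 1`, `xᵢ = yᵢ`. -/
def deh (n : ℕ) : MvPolynomial (Fin (n + 1)) ℂ →ₐ[ℂ] MvPolynomial (Fin n) ℂ :=
  aeval (fun i => Fin.cases 1 (fun j => X j) i)

/-- The point `(1:0:⋯:0)`. -/
def pt (n : ℕ) : Fin (n + 1) → ℂ := fun i => if i = 0 then 1 else 0

/-- Saito's local condition at the origin: `g` lies in the ideal generated by its partial
derivatives in the localization of `ℂ[y₁,…,yₙ]` at the maximal ideal `(y₁,…,yₙ)`;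
equivalently, `u·g ∈ (g₁,…,gₙ)` for some polynomial `u` with `u(0) ≠ 0`. -/
def SaitoQH {n : ℕ} (g : MvPolynomial (Fin n) ℂ) : Prop :=
  ∃ u : MvPolynomial (Fin n) ℂ, eval (0 : Fin n → ℂ) u ≠ 0 ∧
    u * g ∈ Ideal.span (Set.range fun j : Fin n => pderiv j g)

/-! Dehomogenizing the Jacobian syzygy `Σ Aᵢ ∂ᵢf = 0` turns `∂₀f` into `d·g − Σⱼ yⱼ gⱼ` by
Euler's identity, so `b₀·(d·g − Σⱼ yⱼ gⱼ) + Σⱼ bⱼ gⱼ = 0`. Solving for `d·b₀·g` exhibits it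
in `(g₁,…,gₙ)`, and `d·b₀` is a unit of the local ring since `b₀(0) = A₀(p) ≠ 0`. -/

section Dehomogenization

variable {n : ℕ}

@[simp]
lemma deh_X_zero : deh n (X 0) = 1 := by
  simp [deh]

@[simp]
lemma deh_X_succ (j : Fin n) : deh n (X j.succ) = X j := by
  simp [deh]

lemma pderiv_deh (j : Fin n) (f : MvPolynomial (Fin (n + 1)) ℂ) :
    pderiv j (deh n f) = deh n (pderiv j.succ f) := by
  induction f using MvPolynomial.induction_on with
  | C a => simp [deh]
  | add p q hp hq => simp [hp, hq]
  | mul_X p i ih =>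
    rw [map_mul, pderiv_mul, pderiv_mul, map_add, map_mul, map_mul, ih]
    congr 1
    cases i using Fin.cases with
    | zero => simp [Fin.succ_ne_zero]
    | succ k =>
      rcases eq_or_ne k j with rfl | h
      · simp
      · rw [deh_X_succ, pderiv_X_of_ne h, pderiv_X_of_ne (Fin.succ_injective _ |>.ne h), map_zero]

lemma eval_zero_deh (p : MvPolynomial (Fin (n + 1)) ℂ) :
    eval (0 : Fin n → ℂ) (deh n p) = eval (pt n) p := by
  induction p using MvPolynomial.induction_on with
  | C a => simp [deh]
  | add p q hp hq => rw [map_add, eval_add, eval_add, hp, hq]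
  | mul_X p i ih =>
    rw [map_mul, eval_mul, eval_mul, ih]
    cases i using Fin.cases with
    | zero => simp [pt]
    | succ k => simp [pt, Fin.succ_ne_zero]

lemma deh_pderiv_zero_of_isHomogeneous {d : ℕ} {f : MvPolynomial (Fin (n + 1)) ℂ}
    (hf : f.IsHomogeneous d) :
    deh n (pderiv 0 f) = C (d : ℂ) * deh n f - ∑ j, X j * pderiv j (deh n f) := by
  have euler := congrArg (deh n) hf.sum_X_mul_pderiv
  simp only [map_add, map_sum, map_mul, map_nsmul, Fin.sum_univ_succ, deh_X_zero, one_mul, deh_X_succ,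
    ← pderiv_deh] at euler
  rw [eq_sub_iff_add_eq, euler, nsmul_eq_mul, map_natCast]

lemma deh_syzygy {d : ℕ} {f : MvPolynomial (Fin (n + 1)) ℂ} (hf : f.IsHomogeneous d)
    {A : Fin (n + 1) → MvPolynomial (Fin (n + 1)) ℂ} (hA : ∑ i, A i * pderiv i f = 0) :
    deh n (A 0) * (C (d : ℂ) * deh n f - ∑ j, X j * pderiv j (deh n f))
      + ∑ j, deh n (A j.succ) * pderiv j (deh n f) = 0 := by
  have h := congrArg (deh n) hA
  simp only [map_add, map_sum, map_mul, map_zero, Fin.sum_univ_succ, ← pderiv_deh] at h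
  rwa [← deh_pderiv_zero_of_isHomogeneous hf]

end Dehomogenization

lemma mul_mem_span_of_mul_sub_add_sum_eq_zero {R ι : Type*} [CommRing R] [Fintype ι]
    {g x b : ι → R} {b₀ h : R} (hsyz : b₀ * (h - ∑ j, x j * g j) + ∑ j, b j * g j = 0) :
    b₀ * h ∈ Ideal.span (Set.range g) := by
  have hsolve : b₀ * h = ∑ j, (b₀ * x j - b j) * g j := by
    simp only [sub_mul, Finset.sum_sub_distrib, mul_assoc, ← Finset.mul_sum]
    linear_combination hsyz
  rw [hsolve]
  exact Ideal.sum_mem _ fun j _ => Ideal.mul_mem_left _ _ (Ideal.subset_span ⟨j, rfl⟩)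

theorem stmt_4_general (n d : ℕ) (hd : 1 ≤ d) (f : MvPolynomial (Fin (n + 1)) ℂ)
    (hf : f.IsHomogeneous d)
    (A : Fin (n + 1) → MvPolynomial (Fin (n + 1)) ℂ)
    (hA : ∑ i, A i * pderiv i f = 0)
    (h0 : eval (pt n) (A 0) ≠ 0) :
    (deh n (A 0) * (C (d : ℂ) * deh n f - ∑ j, X j * pderiv j (deh n f))
        + ∑ j, deh n (A j.succ) * pderiv j (deh n f) = 0) ∧
      eval (0 : Fin n → ℂ) (deh n (A 0)) ≠ 0 ∧
      SaitoQH (deh n f) := by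
  have hsyz := deh_syzygy hf hA
  have hb₀ : eval (0 : Fin n → ℂ) (deh n (A 0)) ≠ 0 := by rwa [eval_zero_deh]
  refine ⟨hsyz, hb₀, deh n (A 0) * C (d : ℂ), ?_, ?_⟩
  · simpa [Nat.one_le_iff_ne_zero.mp hd] using hb₀
  · rw [mul_assoc]
    exact mul_mem_span_of_mul_sub_add_sum_eq_zero hsyz

/-- Case 1 of the proof of Theorem 3.1: a Jacobian syzygy `(A₀,…,Aₙ)` of `f` whose zeroth
component does not vanish at `p = (1:0:⋯:0)` yields the dehomogenized identity
`b₀·(d·g − Σⱼ yⱼ gⱼ) + Σⱼ bⱼ gⱼ = 0` (where `bⱼ(y) = Aⱼ(1,y)`) with `b₀(0) ≠ 0`, and hence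
that `g = f(1,y)` belongs to the ideal `(g₁,…,gₙ)` in the localization of `ℂ[y₁,…,yₙ]`
at the maximal ideal `(y₁,…,yₙ)`. -/
theorem stmt_4 (n d : ℕ) (hn : 1 ≤ n) (hd : 1 ≤ d) (f : MvPolynomial (Fin (n + 1)) ℂ)
    (hf : f.IsHomogeneous d)
    (A : Fin (n + 1) → MvPolynomial (Fin (n + 1)) ℂ)
    (hA : ∑ i, A i * pderiv i f = 0)
    (h0 : eval (pt n) (A 0) ≠ 0) :
    (deh n (A 0) * (C (d : ℂ) * deh n f - ∑ j, X j * pderiv j (deh n f))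
        + ∑ j, deh n (A j.succ) * pderiv j (deh n f) = 0) ∧
      eval (0 : Fin n → ℂ) (deh n (A 0)) ≠ 0 ∧
      SaitoQH (deh n f) :=
  stmt_4_general n d hd f hf A hA h0
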